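/- Let θ > 0 and H ∈ (0,1/2). Then the function s ↦ e^{-θs} ∫_0^s e^{θu} u^{2H-1} du is bounded on (0,∞), and consequently for K ∈ (0,1] with 2HK−2H−1 < 0 there exists C > 0 such that e^{-θt}e^{-θs} ∫_s^t e^{θv} ∫_0^s e^{θu} (uv)^{2H-1}(u^{2H}+v^{2H})^{K-2} du dv ≤ C t^{2HK-2H-1} for all 1 ≤ s < t. -/

import Mathlib

open MeasureTheory Real

lemma aux_integrable (θ H : ℝ) (hH0 : 0 < H) (a b : ℝ) :
    IntervalIntegrable (fun u => Real.exp (θ*u) * u ^ (2*H-1)) volume a b := by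
  have h := intervalIntegral.intervalIntegrable_rpow' (a:=a) (b:=b) (r:=2*H-1) (by linarith)
  exact h.continuousOn_mul
    ((Real.continuous_exp.comp (continuous_const.mul continuous_id)).continuousOn)

lemma aux_exp_integral (θ a b : ℝ) (hθ : θ ≠ 0) :
    ∫ v in a..b, Real.exp (θ*v) = (Real.exp (θ*b) - Real.exp (θ*a))/θ := by
  have := intervalIntegral.integral_comp_mul_left (a:=a) (b:=b) (fun x => Real.exp x) hθ
  simp only [integral_exp, smul_eq_mul] at this
  rw [this]; field_simp

lemma aux_exp_cont (θ : ℝ) : Continuous fun u : ℝ => Real.exp (θ*u) :=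
  Real.continuous_exp.comp (continuous_const.mul continuous_id)

lemma aux_head (θ H : ℝ) (hθ : 0 < θ) (hH0 : 0 < H) (hH : H < 1/2) (c : ℝ) (hc0 : 0 ≤ c)
    (hc1 : c ≤ 1) :
    ∫ u in (0:ℝ)..c, Real.exp (θ*u) * u ^ (2*H-1) ≤ Real.exp θ / (2*H) := by
  have h1 : ∫ u in (0:ℝ)..c, Real.exp (θ*u) * u ^ (2*H-1)
      ≤ ∫ u in (0:ℝ)..c, Real.exp θ * u ^ (2*H-1) := by
    apply intervalIntegral.integral_mono_on hc0 (aux_integrable θ H hH0 0 c)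
      ((intervalIntegral.intervalIntegrable_rpow' (by linarith)).const_mul _)
    intro u hu
    have h2 : Real.exp (θ*u) ≤ Real.exp θ := by
      apply Real.exp_le_exp.2
      nlinarith [hu.1, hu.2]
    exact mul_le_mul_of_nonneg_right h2 (Real.rpow_nonneg hu.1 _)
  have h3 : ∫ u in (0:ℝ)..c, Real.exp θ * u ^ (2*H-1)
      = Real.exp θ * (c ^ (2*H) / (2*H)) := by
    rw [intervalIntegral.integral_const_mul, integral_rpow (Or.inl (by linarith))]
    rw [Real.zero_rpow (by linarith : 2*H-1+1 ≠ 0)]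
    ring_nf
  have h4 : c ^ (2*H) ≤ 1 := Real.rpow_le_one hc0 hc1 (by linarith)
  have h5 : Real.exp θ * (c ^ (2*H) / (2*H)) ≤ Real.exp θ / (2*H) := by
    rw [← mul_div_assoc]
    gcongr
    nlinarith [Real.exp_pos θ]
  linarith [h3 ▸ h1]

lemma part1 (θ H : ℝ) (hθ : 0 < θ) (hH0 : 0 < H) (hH : H < 1/2) (s : ℝ) (hs : 0 < s) :
    Real.exp (-θ * s) * (∫ u in Set.Ioc (0:ℝ) s, Real.exp (θ*u) * u ^ (2*H-1))
      ≤ Real.exp θ / (2*H) + 1/θ := by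
  have hIoc : (∫ u in Set.Ioc (0:ℝ) s, Real.exp (θ*u) * u ^ (2*H-1))
      = ∫ u in (0:ℝ)..s, Real.exp (θ*u) * u ^ (2*H-1) :=
    (intervalIntegral.integral_of_le hs.le).symm
  rw [hIoc]
  have hes : Real.exp (-θ*s) ≤ 1 := Real.exp_le_one_iff.2 (by nlinarith)
  have hesp : (0:ℝ) < Real.exp (-θ*s) := Real.exp_pos _
  have hMp : (0:ℝ) < Real.exp θ / (2*H) := by positivity
  rcases le_or_gt s 1 with h1 | h1
  · have hb := aux_head θ H hθ hH0 hH s hs.le h1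
    have hnn : 0 ≤ ∫ u in (0:ℝ)..s, Real.exp (θ*u) * u ^ (2*H-1) := by
      rw [intervalIntegral.integral_of_le hs.le]
      apply setIntegral_nonneg measurableSet_Ioc
      intro u hu
      exact mul_nonneg (Real.exp_nonneg _) (Real.rpow_nonneg hu.1.le _)
    nlinarith [one_div_pos.2 hθ]
  · have hsplit : ∫ u in (0:ℝ)..s, Real.exp (θ*u) * u ^ (2*H-1)
        = (∫ u in (0:ℝ)..1, Real.exp (θ*u) * u ^ (2*H-1))
          + ∫ u in (1:ℝ)..s, Real.exp (θ*u) * u ^ (2*H-1) :=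
      (intervalIntegral.integral_add_adjacent_intervals (aux_integrable θ H hH0 0 1)
        (aux_integrable θ H hH0 1 s)).symm
    have hhead := aux_head θ H hθ hH0 hH 1 zero_le_one le_rfl
    have htail : ∫ u in (1:ℝ)..s, Real.exp (θ*u) * u ^ (2*H-1)
        ≤ Real.exp (θ*s) / θ := by
      have h2 : ∫ u in (1:ℝ)..s, Real.exp (θ*u) * u ^ (2*H-1)
          ≤ ∫ u in (1:ℝ)..s, Real.exp (θ*u) := by
        apply intervalIntegral.integral_mono_on (g := fun u => Real.exp (θ*u)) h1.le
          (aux_integrable θ H hH0 1 s) ((aux_exp_cont θ).continuousOn.intervalIntegrable)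
        intro u hu
        have : u ^ (2*H-1) ≤ 1 :=
          Real.rpow_le_one_of_one_le_of_nonpos hu.1 (by linarith)
        nlinarith [Real.exp_pos (θ*u)]
      rw [aux_exp_integral θ 1 s hθ.ne'] at h2
      have h3 : (Real.exp (θ*s) - Real.exp (θ*1))/θ ≤ Real.exp (θ*s)/θ := by
        gcongr
        linarith [Real.exp_pos (θ*1)]
      linarith
    have hheadnn : 0 ≤ ∫ u in (0:ℝ)..1, Real.exp (θ*u) * u ^ (2*H-1) := by
      rw [intervalIntegral.integral_of_le zero_le_one]
      apply setIntegral_nonneg measurableSet_Ioc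
      intro u hu
      exact mul_nonneg (Real.exp_nonneg _) (Real.rpow_nonneg hu.1.le _)
    have h10 : Real.exp (-θ*s) * (Real.exp (θ*s)/θ) = 1/θ := by
      rw [← mul_div_assoc, ← Real.exp_add]
      norm_num
    rw [hsplit, mul_add]
    have b1 := mul_le_mul_of_nonneg_left hhead hesp.le
    have b3 := mul_le_mul_of_nonneg_left htail hesp.le
    nlinarith [b1, b3, h10, hes, hMp, hesp]


lemma exp_decay (θ α t : ℝ) (hθ : 0 < θ) (hα3 : -3 ≤ α) (ht : 1 ≤ t) :
    Real.exp (-(θ*t/2)) ≤ (6/θ)^3 * t ^ α := by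
  have ht0 : (0:ℝ) < t := by linarith
  have k1 : t ^ (-α) ≤ t ^ (3:ℝ) := Real.rpow_le_rpow_of_exponent_le ht (by linarith)
  have k2 : t ≤ 6/θ * Real.exp (θ*t/6) := by
    have h := Real.add_one_le_exp (θ*t/6)
    have : 6/θ * (θ*t/6) ≤ 6/θ * Real.exp (θ*t/6) := by
      apply mul_le_mul_of_nonneg_left (by linarith) (by positivity)
    calc t = 6/θ * (θ*t/6) := by field_simp
      _ ≤ 6/θ * Real.exp (θ*t/6) := this
  have k3 : t ^ (3:ℝ) = t^(3:ℕ) := Real.rpow_natCast t 3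
  have k4 : t^(3:ℕ) ≤ (6/θ * Real.exp (θ*t/6))^(3:ℕ) := by
    apply pow_le_pow_left₀ ht0.le k2
  have k5 : (6/θ * Real.exp (θ*t/6))^(3:ℕ) = (6/θ)^3 * Real.exp (θ*t/2) := by
    rw [mul_pow, ← Real.exp_nat_mul]
    norm_num
    left
    ring
  have key : t ^ (-α) ≤ (6/θ)^3 * Real.exp (θ*t/2) := by
    rw [k3] at k1; rw [k5] at k4; exact k1.trans k4
  have e1 : Real.exp (-(θ*t/2)) * Real.exp (θ*t/2) = 1 := by
    rw [← Real.exp_add, neg_add_cancel, Real.exp_zero]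
  have e2 : t ^ α * t ^ (-α) = 1 := by
    rw [← Real.rpow_add ht0, add_neg_cancel, Real.rpow_zero]
  have hpos : (0:ℝ) ≤ Real.exp (-(θ*t/2)) * t ^ α :=
    mul_nonneg (Real.exp_nonneg _) (Real.rpow_nonneg ht0.le _)
  calc Real.exp (-(θ*t/2)) = (Real.exp (-(θ*t/2)) * t ^ α) * t ^ (-α) := by
        rw [mul_assoc, e2, mul_one]
    _ ≤ (Real.exp (-(θ*t/2)) * t ^ α) * ((6/θ)^3 * Real.exp (θ*t/2)) :=
        mul_le_mul_of_nonneg_left key hpos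
    _ = (6/θ)^3 * t ^ α * (Real.exp (-(θ*t/2)) * Real.exp (θ*t/2)) := by ring
    _ = (6/θ)^3 * t ^ α := by rw [e1, mul_one]

/-- For `θ > 0` and `H ∈ (0,1/2)`, the function `s ↦ e^{-θs}∫_0^s e^{θu}u^{2H-1} du` is bounded
on `(0,∞)`; consequently, for `K ∈ (0,1]` with `2HK−2H−1 < 0`, the double integral
`e^{-θt}e^{-θs}∫_s^t e^{θv}∫_0^s e^{θu}(uv)^{2H-1}(u^{2H}+v^{2H})^{K-2} du dv` is bounded by
`C t^{2HK-2H-1}` for `1 ≤ s < t`. -/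
theorem lambda_HK_bound (θ H K : ℝ) (hθ : 0 < θ) (hH0 : 0 < H) (hH : H < 1/2)
    (hK0 : 0 < K) (hK1 : K ≤ 1) (hexp : 2 * H * K - 2 * H - 1 < 0) :
    (∃ M : ℝ, ∀ s : ℝ, 0 < s →
      Real.exp (-θ * s) * (∫ u in Set.Ioc (0 : ℝ) s, Real.exp (θ * u) * u ^ (2 * H - 1)) ≤ M) ∧
    ∃ C : ℝ, 0 < C ∧ ∀ s t : ℝ, 1 ≤ s → s < t →
      Real.exp (-θ * t) * Real.exp (-θ * s) *
        (∫ v in Set.Ioc s t, Real.exp (θ * v) *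
          ∫ u in Set.Ioc (0 : ℝ) s,
            Real.exp (θ * u) * (u * v) ^ (2 * H - 1) * (u ^ (2 * H) + v ^ (2 * H)) ^ (K - 2))
        ≤ C * t ^ (2 * H * K - 2 * H - 1) := by
  set α := 2 * H * K - 2 * H - 1 with hαdef
  have hα0 : α ≤ 0 := hexp.le
  have hα2 : (-2:ℝ) < α := by
    rw [hαdef]
    nlinarith [mul_nonneg (by linarith : (0:ℝ) ≤ 1-2*H) (by linarith : (0:ℝ) ≤ 1-K)]
  have hM : (0:ℝ) < Real.exp θ / (2*H) + 1/θ := by positivity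
  constructor
  · exact ⟨Real.exp θ / (2*H) + 1/θ, fun s hs => part1 θ H hθ hH0 hH s hs⟩
  refine ⟨(Real.exp θ / (2*H) + 1/θ) * ((6/θ)^3/θ + (2:ℝ)^(-α)/θ), by positivity,
    fun s t hs hst => ?_⟩
  have hs0 : (0:ℝ) < s := lt_of_lt_of_le one_pos hs
  have ht1 : (1:ℝ) < t := lt_of_le_of_lt hs hst
  have ht0 : (0:ℝ) < t := by linarith
  set m := max s (t/2) with hm
  have hsm : s ≤ m := le_max_left _ _
  have hmt : m ≤ t := max_le hst.le (by linarith)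
  have hm1 : (1:ℝ) ≤ m := le_trans hs hsm
  have hmhalf : t/2 ≤ m := le_max_right _ _
  have hA0 : 0 ≤ ∫ u in Set.Ioc (0:ℝ) s, Real.exp (θ*u) * u ^ (2*H-1) :=
    setIntegral_nonneg measurableSet_Ioc fun u hu =>
      mul_nonneg (Real.exp_nonneg _) (Real.rpow_nonneg hu.1.le _)
  -- Step A: inner integral bound
  have stepA : ∀ v : ℝ, v ∈ Set.Ioc s t →
      (∫ u in Set.Ioc (0:ℝ) s,
          Real.exp (θ*u) * (u*v) ^ (2*H-1) * (u ^ (2*H) + v ^ (2*H)) ^ (K-2))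
        ≤ v ^ α * ∫ u in Set.Ioc (0:ℝ) s, Real.exp (θ*u) * u ^ (2*H-1) := by
    intro v hv
    have hv0 : (0:ℝ) < v := lt_trans hs0 hv.1
    have h0 : 0 ≤ᵐ[volume.restrict (Set.Ioc (0:ℝ) s)]
        fun u => Real.exp (θ*u) * (u*v) ^ (2*H-1) * (u ^ (2*H) + v ^ (2*H)) ^ (K-2) := by
      apply ae_restrict_of_forall_mem measurableSet_Ioc
      intro u hu
      exact mul_nonneg (mul_nonneg (Real.exp_nonneg _)
          (Real.rpow_nonneg (mul_nonneg hu.1.le hv0.le) _))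
        (Real.rpow_nonneg (add_nonneg (Real.rpow_nonneg hu.1.le _)
          (Real.rpow_nonneg hv0.le _)) _)
    have hgi : Integrable
        (fun u => (Real.exp (θ*u) * u ^ (2*H-1)) * (v ^ (2*H-1) * (v ^ (2*H)) ^ (K-2)))
        (volume.restrict (Set.Ioc (0:ℝ) s)) :=
      ((aux_integrable θ H hH0 0 s).1).mul_const _
    have hle : (fun u => Real.exp (θ*u) * (u*v) ^ (2*H-1) * (u ^ (2*H) + v ^ (2*H)) ^ (K-2))
        ≤ᵐ[volume.restrict (Set.Ioc (0:ℝ) s)]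
        fun u => (Real.exp (θ*u) * u ^ (2*H-1)) * (v ^ (2*H-1) * (v ^ (2*H)) ^ (K-2)) := by
      apply ae_restrict_of_forall_mem measurableSet_Ioc
      intro u hu
      have hu0 : 0 < u := hu.1
      have h1 : (u ^ (2*H) + v ^ (2*H)) ^ (K-2) ≤ (v ^ (2*H)) ^ (K-2) :=
        Real.rpow_le_rpow_of_nonpos (Real.rpow_pos_of_pos hv0 _)
          (le_add_of_nonneg_left (Real.rpow_nonneg hu0.le _)) (by linarith)
      have h2 : 0 ≤ Real.exp (θ*u) * u ^ (2*H-1) * v ^ (2*H-1) :=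
        mul_nonneg (mul_nonneg (Real.exp_nonneg _) (Real.rpow_nonneg hu0.le _))
          (Real.rpow_nonneg hv0.le _)
      calc Real.exp (θ*u) * (u*v) ^ (2*H-1) * (u ^ (2*H) + v ^ (2*H)) ^ (K-2)
          = (Real.exp (θ*u) * u ^ (2*H-1) * v ^ (2*H-1)) * (u ^ (2*H) + v ^ (2*H)) ^ (K-2) := by
            rw [Real.mul_rpow hu0.le hv0.le]; ring
        _ ≤ (Real.exp (θ*u) * u ^ (2*H-1) * v ^ (2*H-1)) * (v ^ (2*H)) ^ (K-2) :=
            mul_le_mul_of_nonneg_left h1 h2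
        _ = (Real.exp (θ*u) * u ^ (2*H-1)) * (v ^ (2*H-1) * (v ^ (2*H)) ^ (K-2)) := by ring
    have hmain := integral_mono_of_nonneg h0 hgi hle
    rw [integral_mul_const] at hmain
    have hveq : v ^ (2*H-1) * (v ^ (2*H)) ^ (K-2) = v ^ α := by
      rw [← Real.rpow_mul hv0.le, ← Real.rpow_add hv0]
      congr 1
      rw [hαdef]; ring
    calc (∫ u in Set.Ioc (0:ℝ) s,
          Real.exp (θ*u) * (u*v) ^ (2*H-1) * (u ^ (2*H) + v ^ (2*H)) ^ (K-2))
        ≤ (∫ u in Set.Ioc (0:ℝ) s, Real.exp (θ*u) * u ^ (2*H-1))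
            * (v ^ (2*H-1) * (v ^ (2*H)) ^ (K-2)) := hmain
      _ = v ^ α * ∫ u in Set.Ioc (0:ℝ) s, Real.exp (θ*u) * u ^ (2*H-1) := by
          rw [hveq]; ring
  -- integrability of the outer comparison function
  have hGcont : ContinuousOn (fun v : ℝ => Real.exp (θ*v) * v ^ α) {v : ℝ | v ≠ 0} :=
    (aux_exp_cont θ).continuousOn.mul
      (ContinuousOn.rpow_const continuousOn_id (fun x hx => Or.inl hx))
  have hGint : ∀ a b : ℝ, 1 ≤ a → 1 ≤ b →
      IntervalIntegrable (fun v : ℝ => Real.exp (θ*v) * v ^ α) volume a b := by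
    intro a b ha hb
    apply (hGcont.mono ?_).intervalIntegrable
    intro x hx
    rw [Set.mem_uIcc] at hx
    have : (1:ℝ) ≤ x := by rcases hx with ⟨h, _⟩ | ⟨h, _⟩ <;> linarith
    exact ne_of_gt (by linarith)
  -- Step B: outer integral bound
  have stepB : (∫ v in Set.Ioc s t, Real.exp (θ*v) *
        ∫ u in Set.Ioc (0:ℝ) s,
          Real.exp (θ*u) * (u*v) ^ (2*H-1) * (u ^ (2*H) + v ^ (2*H)) ^ (K-2))
      ≤ (∫ v in Set.Ioc s t, Real.exp (θ*v) * v ^ α)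
          * ∫ u in Set.Ioc (0:ℝ) s, Real.exp (θ*u) * u ^ (2*H-1) := by
    have h0 : 0 ≤ᵐ[volume.restrict (Set.Ioc s t)]
        fun v => Real.exp (θ*v) * ∫ u in Set.Ioc (0:ℝ) s,
          Real.exp (θ*u) * (u*v) ^ (2*H-1) * (u ^ (2*H) + v ^ (2*H)) ^ (K-2) := by
      apply ae_restrict_of_forall_mem measurableSet_Ioc
      intro v hv
      have hv0 : (0:ℝ) < v := lt_trans hs0 hv.1
      refine mul_nonneg (Real.exp_nonneg _) (setIntegral_nonneg measurableSet_Ioc fun u hu => ?_)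
      exact mul_nonneg (mul_nonneg (Real.exp_nonneg _)
          (Real.rpow_nonneg (mul_nonneg hu.1.le hv0.le) _))
        (Real.rpow_nonneg (add_nonneg (Real.rpow_nonneg hu.1.le _)
          (Real.rpow_nonneg hv0.le _)) _)
    have hgi : Integrable
        (fun v => (Real.exp (θ*v) * v ^ α)
            * ∫ u in Set.Ioc (0:ℝ) s, Real.exp (θ*u) * u ^ (2*H-1))
        (volume.restrict (Set.Ioc s t)) :=
      ((hGint s t hs ht1.le).1).mul_const _
    have hle : (fun v => Real.exp (θ*v) * ∫ u in Set.Ioc (0:ℝ) s,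
          Real.exp (θ*u) * (u*v) ^ (2*H-1) * (u ^ (2*H) + v ^ (2*H)) ^ (K-2))
        ≤ᵐ[volume.restrict (Set.Ioc s t)]
        fun v => (Real.exp (θ*v) * v ^ α)
            * ∫ u in Set.Ioc (0:ℝ) s, Real.exp (θ*u) * u ^ (2*H-1) := by
      apply ae_restrict_of_forall_mem measurableSet_Ioc
      intro v hv
      calc Real.exp (θ*v) * ∫ u in Set.Ioc (0:ℝ) s,
            Real.exp (θ*u) * (u*v) ^ (2*H-1) * (u ^ (2*H) + v ^ (2*H)) ^ (K-2)
          ≤ Real.exp (θ*v) * (v ^ α * ∫ u in Set.Ioc (0:ℝ) s, Real.exp (θ*u) * u ^ (2*H-1)) :=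
            mul_le_mul_of_nonneg_left (stepA v hv) (Real.exp_nonneg _)
        _ = (Real.exp (θ*v) * v ^ α)
              * ∫ u in Set.Ioc (0:ℝ) s, Real.exp (θ*u) * u ^ (2*H-1) := by ring
    have hmain := integral_mono_of_nonneg h0 hgi hle
    rwa [integral_mul_const] at hmain
  -- Step C: bound on e^{-θt} ∫ G
  have hsm_int := hGint s m hs hm1
  have hmt_int := hGint m t hm1 ht1.le
  have hIG : (∫ v in Set.Ioc s t, Real.exp (θ*v) * v ^ α)
      = (∫ v in s..m, Real.exp (θ*v) * v ^ α) + ∫ v in m..t, Real.exp (θ*v) * v ^ α := by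
    rw [← intervalIntegral.integral_of_le hst.le,
      ← intervalIntegral.integral_add_adjacent_intervals hsm_int hmt_int]
  have hP1 : Real.exp (-θ*t) * ∫ v in s..m, Real.exp (θ*v) * v ^ α
      ≤ Real.exp (-(θ*t/2)) / θ := by
    rcases le_or_gt s (t/2) with hcase | hcase
    · have hmeq : m = t/2 := max_eq_right hcase
      have h2 : ∫ v in s..m, Real.exp (θ*v) * v ^ α ≤ ∫ v in s..m, Real.exp (θ*v) := by
        apply intervalIntegral.integral_mono_on hsm hsm_int
          ((aux_exp_cont θ).continuousOn.intervalIntegrable)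
        intro v hv
        have h3 : v ^ α ≤ 1 :=
          Real.rpow_le_one_of_one_le_of_nonpos (le_trans hs hv.1) hα0
        nlinarith [Real.exp_pos (θ*v)]
      rw [aux_exp_integral θ s m hθ.ne'] at h2
      have h4 : (Real.exp (θ*m) - Real.exp (θ*s))/θ ≤ Real.exp (θ*m)/θ := by
        gcongr
        linarith [Real.exp_pos (θ*s)]
      have h5 : Real.exp (-θ*t) * (Real.exp (θ*m)/θ) = Real.exp (-(θ*t/2)) / θ := by
        rw [← mul_div_assoc, ← Real.exp_add, hmeq,
          show -θ*t + θ*(t/2) = -(θ*t/2) by ring]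
      have h6 := mul_le_mul_of_nonneg_left (h2.trans h4) (Real.exp_nonneg (-θ*t))
      linarith [h5 ▸ h6]
    · have hmeq : m = s := max_eq_left hcase.le
      rw [hmeq, intervalIntegral.integral_same, mul_zero]
      positivity
  have hP2 : Real.exp (-θ*t) * ∫ v in m..t, Real.exp (θ*v) * v ^ α
      ≤ (2:ℝ) ^ (-α) * t ^ α / θ := by
    have h2 : ∫ v in m..t, Real.exp (θ*v) * v ^ α
        ≤ ∫ v in m..t, Real.exp (θ*v) * (t/2) ^ α := by
      apply intervalIntegral.integral_mono_on hmt hmt_int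
        (((aux_exp_cont θ).mul continuous_const).continuousOn.intervalIntegrable)
      intro v hv
      have hv2 : t/2 ≤ v := le_trans hmhalf hv.1
      have h3 : v ^ α ≤ (t/2) ^ α :=
        Real.rpow_le_rpow_of_nonpos (by linarith) hv2 hα0
      exact mul_le_mul_of_nonneg_left h3 (Real.exp_nonneg _)
    rw [intervalIntegral.integral_mul_const, aux_exp_integral θ m t hθ.ne'] at h2
    have h4 : (Real.exp (θ*t) - Real.exp (θ*m))/θ * (t/2) ^ α
        ≤ Real.exp (θ*t)/θ * (t/2) ^ α := by
      apply mul_le_mul_of_nonneg_right ?_ (Real.rpow_nonneg (by linarith) _)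
      gcongr
      linarith [Real.exp_pos (θ*m)]
    have e1 : Real.exp (-θ*t) * Real.exp (θ*t) = 1 := by
      rw [← Real.exp_add, show -θ*t + θ*t = 0 by ring, Real.exp_zero]
    have h5 : Real.exp (-θ*t) * (Real.exp (θ*t)/θ * (t/2) ^ α) = (t/2) ^ α / θ := by
      rw [show Real.exp (θ*t)/θ * (t/2) ^ α = Real.exp (θ*t) * ((t/2) ^ α / θ) by ring,
        ← mul_assoc, e1, one_mul]
    have h6 : ((t/2):ℝ) ^ α = (2:ℝ) ^ (-α) * t ^ α := by
      rw [Real.div_rpow ht0.le (by norm_num), Real.rpow_neg (by norm_num), div_eq_mul_inv]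
      ring
    have h7 := mul_le_mul_of_nonneg_left (h2.trans h4) (Real.exp_nonneg (-θ*t))
    rw [h5, h6] at h7
    linarith
  have hd := exp_decay θ α t hθ (by linarith) ht1.le
  have hC2 : Real.exp (-θ*t) * (∫ v in Set.Ioc s t, Real.exp (θ*v) * v ^ α)
      ≤ (6/θ)^3 * t ^ α / θ + (2:ℝ) ^ (-α) * t ^ α / θ := by
    rw [hIG, mul_add]
    have h8 : Real.exp (-(θ*t/2))/θ ≤ (6/θ)^3 * t ^ α / θ := by gcongr
    linarith
  -- Final assembly
  have hOut0 : 0 ≤ ∫ v in Set.Ioc s t, Real.exp (θ*v) * v ^ α := by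
    apply setIntegral_nonneg measurableSet_Ioc
    intro v hv
    exact mul_nonneg (Real.exp_nonneg _) (Real.rpow_nonneg (lt_trans hs0 hv.1).le _)
  calc Real.exp (-θ * t) * Real.exp (-θ * s) *
        (∫ v in Set.Ioc s t, Real.exp (θ * v) *
          ∫ u in Set.Ioc (0 : ℝ) s,
            Real.exp (θ * u) * (u * v) ^ (2 * H - 1) * (u ^ (2 * H) + v ^ (2 * H)) ^ (K - 2))
      ≤ Real.exp (-θ * t) * Real.exp (-θ * s) *
          ((∫ v in Set.Ioc s t, Real.exp (θ*v) * v ^ α)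
            * ∫ u in Set.Ioc (0:ℝ) s, Real.exp (θ*u) * u ^ (2*H-1)) := by
        apply mul_le_mul_of_nonneg_left stepB (by positivity)
    _ = (Real.exp (-θ * s) * ∫ u in Set.Ioc (0:ℝ) s, Real.exp (θ*u) * u ^ (2*H-1))
          * (Real.exp (-θ * t) * ∫ v in Set.Ioc s t, Real.exp (θ*v) * v ^ α) := by ring
    _ ≤ (Real.exp θ / (2*H) + 1/θ) * ((6/θ)^3 * t ^ α / θ + (2:ℝ) ^ (-α) * t ^ α / θ) := by
        apply mul_le_mul (part1 θ H hθ hH0 hH s hs0) hC2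
          (mul_nonneg (Real.exp_nonneg _) hOut0) hM.le
    _ = (Real.exp θ / (2*H) + 1/θ) * ((6/θ)^3/θ + (2:ℝ)^(-α)/θ) * t ^ α := by ring
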